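/- arXiv:1703.06485 — 2 statements merged into one kernel-verified Lean document; each statement's English description precedes it below -/
import Mathlib

section
/- Let a < b be real numbers, let c_1, …, c_K ∈ ℝ^n be constant vectors, let α be a chattering measure, and let N be a positive integer. Partition [a,b] into N subintervals of equal length Δ = (b−a)/N, and on each subinterval apply the explicit chattering construction (consecutive pieces of lengths α_1 Δ, …, α_K Δ with values c_1, …, c_K); call the resulting function g_N : [a,b] → ℝ^n. Then for every t ∈ [a,b], ‖∫_a^t (g_N(τ) − Σ_{k=1}^K α_k c_k) dτ‖ ≤ 2 · ((b−a)/N) · max_{1 ≤ k ≤ K} ‖c_k‖. In particular, sup_{t∈[a,b]} ‖∫_a^t (g_N − Σ_k α_k c_k)‖ → 0 as N → ∞, so for every ε > 0 there exists N such that g_N witnesses the Chattering Lemma bound with that ε. -/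
/-! On each cell `[x, x + Δ)` the chattering function spends time `α k * Δ` at level `c k`, so
its integral over the cell is exactly `Δ • ∑ k, α k • c k`. Hence the running integral of
`g - ∑ k, α k • c k` vanishes at every node `a + i * Δ`, and at any other time `t` it is the
integral over part of a single cell, where the integrand has norm at most `2 * max_k ‖c k‖`. -/

open MeasureTheory Set

open Filter Topology Interval

theorem exists_mem_Ico_succ_of_mem_Ico {β : Type*} [LinearOrder β] {p : ℕ → β} {K : ℕ} {x : β}
    (hx : x ∈ Ico (p 0) (p K)) : ∃ k < K, x ∈ Ico (p k) (p (k + 1)) := by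
  induction K with
  | zero => exact absurd hx (by simp)
  | succ K ih =>
    by_cases hxK : x < p K
    · obtain ⟨k, hk, hxk⟩ := ih ⟨hx.1, hxK⟩
      exact ⟨k, by omega, hxk⟩
    · exact ⟨K, K.lt_succ_self, not_lt.1 hxK, hx.2⟩

def IsChatteringOn {E : Type*} (K : ℕ) (α : ℕ → ℝ) (c : ℕ → E) (g : ℝ → E) (x Δ : ℝ) : Prop :=
  ∀ k < K, ∀ t ∈ Ico (x + Δ * ∑ j ∈ Finset.range k, α j)
    (x + Δ * ∑ j ∈ Finset.range (k + 1), α j), g t = c k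

theorem IsChatteringOn.exists_eq {E : Type*} {K : ℕ} {α : ℕ → ℝ} {c : ℕ → E} {g : ℝ → E}
    {x Δ : ℝ} (hα1 : ∑ k ∈ Finset.range K, α k = 1) (hg : IsChatteringOn K α c g x Δ)
    {t : ℝ} (ht : t ∈ Ico x (x + Δ)) : ∃ k < K, g t = c k := by
  obtain ⟨k, hk, htk⟩ := exists_mem_Ico_succ_of_mem_Ico
    (p := fun k => x + Δ * ∑ j ∈ Finset.range k, α j) (K := K) (by simpa [hα1] using ht)
  exact ⟨k, hk, hg k hk t htk⟩

section

variable {E : Type*} [NormedAddCommGroup E]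

theorem norm_sum_smul_le_of_sum_eq_one [NormedSpace ℝ E] {ι : Type*} {s : Finset ι}
    {w : ι → ℝ} {v : ι → E} {M : ℝ} (hw0 : ∀ i ∈ s, 0 ≤ w i) (hw1 : ∑ i ∈ s, w i = 1)
    (hv : ∀ i ∈ s, ‖v i‖ ≤ M) :
    ‖∑ i ∈ s, w i • v i‖ ≤ M :=
  mem_closedBall_zero_iff.1 <|
    (convex_closedBall 0 M).sum_mem hw0 hw1 fun i hi => mem_closedBall_zero_iff.2 (hv i hi)

theorem intervalIntegrable_of_eqOn_Ioo {g : ℝ → E} {c : E} {x y : ℝ} (hxy : x ≤ y)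
    (hg : EqOn g (fun _ => c) (Ioo x y)) : IntervalIntegrable g volume x y := by
  rw [intervalIntegrable_iff_integrableOn_Ioo_of_le hxy]
  exact (integrableOn_const measure_Ioo_lt_top.ne).congr_fun hg.symm measurableSet_Ioo

theorem intervalIntegral.integral_eq_of_eqOn_Ioo [NormedSpace ℝ E] [CompleteSpace E]
    {g : ℝ → E} {c : E} {x y : ℝ} (hxy : x ≤ y) (hg : EqOn g (fun _ => c) (Ioo x y)) :
    ∫ t in x..y, g t = (y - x) • c := by
  rw [intervalIntegral.integral_of_le hxy, integral_Ioc_eq_integral_Ioo,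
    setIntegral_congr_fun measurableSet_Ioo hg, setIntegral_const, Real.volume_real_Ioo_of_le hxy]

theorem IsChatteringOn.intervalIntegrable_and_integral_eq [NormedSpace ℝ E] [CompleteSpace E]
    {K : ℕ} {α : ℕ → ℝ} {c : ℕ → E} {g : ℝ → E} {x Δ : ℝ} (hα0 : ∀ k < K, 0 ≤ α k)
    (hα1 : ∑ k ∈ Finset.range K, α k = 1) (hΔ : 0 ≤ Δ) (hg : IsChatteringOn K α c g x Δ) :
    IntervalIntegrable g volume x (x + Δ) ∧
      ∫ t in x..x + Δ, g t = Δ • ∑ k ∈ Finset.range K, α k • c k := by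
  set p : ℕ → ℝ := fun k => x + Δ * ∑ j ∈ Finset.range k, α j
  have hp_succ (k : ℕ) : p (k + 1) - p k = Δ * α k := by
    simp only [p, Finset.sum_range_succ]; ring
  have hp_le (k : ℕ) (hk : k < K) : p k ≤ p (k + 1) :=
    sub_nonneg.1 (hp_succ k ▸ mul_nonneg hΔ (hα0 k hk))
  have hint (k : ℕ) (hk : k < K) : IntervalIntegrable g volume (p k) (p (k + 1)) :=
    intervalIntegrable_of_eqOn_Ioo (hp_le k hk) fun t ht => hg k hk t (Ioo_subset_Ico_self ht)
  have hp0 : p 0 = x := by simp [p]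
  have hpK : p K = x + Δ := by simp [p, hα1]
  rw [← hpK, ← hp0]
  refine ⟨IntervalIntegrable.trans_iterate hint, ?_⟩
  rw [← intervalIntegral.sum_integral_adjacent_intervals hint, Finset.smul_sum]
  refine Finset.sum_congr rfl fun k hk => ?_
  have hk : k < K := Finset.mem_range.1 hk
  rw [intervalIntegral.integral_eq_of_eqOn_Ioo (hp_le k hk)
    fun t ht => hg k hk t (Ioo_subset_Ico_self ht), hp_succ, smul_smul]

theorem norm_integral_le_of_integral_cells_eq_zero [NormedSpace ℝ E] {f : ℝ → E} {q : ℕ → ℝ}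
    {N : ℕ} {B Δ : ℝ} (hB0 : 0 ≤ B) (hΔ0 : 0 ≤ Δ) (hqΔ : ∀ i < N, q (i + 1) - q i ≤ Δ)
    (hint : ∀ i < N, IntervalIntegrable f volume (q i) (q (i + 1)))
    (hzero : ∀ i < N, ∫ x in q i..q (i + 1), f x = 0)
    (hB : ∀ i < N, ∀ x ∈ Ico (q i) (q (i + 1)), ‖f x‖ ≤ B) :
    ∀ t ∈ Icc (q 0) (q N), ‖∫ x in q 0..t, f x‖ ≤ B * Δ := by
  induction N with
  | zero =>
    intro t ht
    rw [Icc_self, mem_singleton_iff] at ht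
    simpa [ht] using mul_nonneg hB0 hΔ0
  | succ N ih =>
    intro t ht
    rcases le_or_gt t (q N) with htN | htN
    · exact ih (fun i hi => hqΔ i (by omega)) (fun i hi => hint i (by omega))
        (fun i hi => hzero i (by omega)) (fun i hi => hB i (by omega)) t ⟨ht.1, htN⟩
    have hint_N : IntervalIntegrable f volume (q 0) (q N) :=
      IntervalIntegrable.trans_iterate fun i hi => hint i (by omega)
    have hzero_N : ∫ x in q 0..q N, f x = 0 := by
      rw [← intervalIntegral.sum_integral_adjacent_intervals fun i hi => hint i (by omega)]
      exact Finset.sum_eq_zero fun i hi => hzero i (by simp at hi; omega)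
    have hint_t : IntervalIntegrable f volume (q N) t :=
      (hint N N.lt_succ_self).mono_set
        (uIcc_subset_uIcc left_mem_uIcc (mem_uIcc_of_le htN.le ht.2))
    -- `f` is only bounded on `[q N, q (N + 1))`, and `t` may be `q (N + 1)`.
    have hbound : ∀ᵐ x, x ∈ Ι (q N) t → ‖f x‖ ≤ B := by
      filter_upwards [Measure.ae_ne volume t] with x hxt hx
      rw [uIoc_of_le htN.le] at hx
      exact hB N N.lt_succ_self x ⟨hx.1.le, (lt_of_le_of_ne hx.2 hxt).trans_le ht.2⟩
    rw [← intervalIntegral.integral_add_adjacent_intervals hint_N hint_t, hzero_N, zero_add]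
    calc ‖∫ x in q N..t, f x‖ ≤ B * |t - q N| :=
          intervalIntegral.norm_integral_le_of_norm_le_const_ae hbound
      _ ≤ B * Δ := by
          rw [abs_of_pos (sub_pos.2 htN)]
          exact mul_le_mul_of_nonneg_left (by linarith [hqΔ N N.lt_succ_self, ht.2]) hB0

theorem norm_integral_sub_le_of_isChatteringOn [NormedSpace ℝ E] [CompleteSpace E]
    {K : ℕ} {α : ℕ → ℝ} {c : ℕ → E} {g : ℝ → E} {a b M : ℝ} {N : ℕ}
    (hα0 : ∀ k < K, 0 ≤ α k) (hα1 : ∑ k ∈ Finset.range K, α k = 1)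
    (hc : ∀ k < K, ‖c k‖ ≤ M) (hN : 0 < N)
    (hg : ∀ i < N, IsChatteringOn K α c g (a + i * ((b - a) / N)) ((b - a) / N))
    {t : ℝ} (ht : t ∈ Icc a b) :
    ‖∫ τ in a..t, (g τ - ∑ k ∈ Finset.range K, α k • c k)‖ ≤ 2 * ((b - a) / N) * M := by
  set Δ := (b - a) / N
  set m := ∑ k ∈ Finset.range K, α k • c k
  set q : ℕ → ℝ := fun i => a + i * Δ
  have hΔ0 : 0 ≤ Δ := div_nonneg (sub_nonneg.2 (ht.1.trans ht.2)) N.cast_nonneg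
  have hq_succ (i : ℕ) : q (i + 1) = q i + Δ := by simp only [q]; push_cast; ring
  have hq0 : q 0 = a := by simp [q]
  have hqN : q N = b := by simp only [q, Δ]; field_simp; ring
  have hm : ‖m‖ ≤ M := norm_sum_smul_le_of_sum_eq_one
    (fun k hk => hα0 k (Finset.mem_range.1 hk)) hα1 (fun k hk => hc k (Finset.mem_range.1 hk))
  have hM0 : 0 ≤ M := (norm_nonneg m).trans hm
  have hcell (i : ℕ) (hi : i < N) := (hg i hi).intervalIntegrable_and_integral_eq hα0 hα1 hΔ0
  rw [← hq0, ← hqN] at ht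
  rw [← hq0, mul_right_comm]
  refine norm_integral_le_of_integral_cells_eq_zero (by positivity) hΔ0 (fun i _ => ?_)
    (fun i hi => ?_) (fun i hi => ?_) (fun i hi x hx => ?_) t ht
  · rw [hq_succ, add_sub_cancel_left]
  · rw [hq_succ]
    exact (hcell i hi).1.sub intervalIntegrable_const
  · rw [hq_succ, intervalIntegral.integral_sub (hcell i hi).1 intervalIntegrable_const,
      (hcell i hi).2, intervalIntegral.integral_const, add_sub_cancel_left, sub_self]
  · rw [hq_succ] at hx
    obtain ⟨k, hk, hgx⟩ := (hg i hi).exists_eq hα1 hx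
    rw [hgx, two_mul]
    exact norm_sub_le_of_le (hc k hk) hm

end

theorem chattering_quantitative_general
    (n K : ℕ) (hK : 0 < K) (a b : ℝ)
    (c : ℕ → EuclideanSpace ℝ (Fin n))
    (α : ℕ → ℝ) (hα0 : ∀ k < K, 0 ≤ α k)
    (hα1 : ∑ k ∈ Finset.range K, α k = 1) :
    (∀ N : ℕ, 0 < N → ∀ g : ℝ → EuclideanSpace ℝ (Fin n),
      (∀ i < N, ∀ k < K,
        ∀ t ∈ Ico (a + i * ((b - a) / N) + ((b - a) / N) * ∑ j ∈ Finset.range k, α j)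
          (a + i * ((b - a) / N) + ((b - a) / N) * ∑ j ∈ Finset.range (k + 1), α j),
          g t = c k) →
      ∀ t ∈ Icc a b,
        ‖∫ τ in a..t, (g τ - ∑ k ∈ Finset.range K, α k • c k)‖ ≤
          2 * ((b - a) / N) *
            (Finset.range K).sup' (Finset.nonempty_range_iff.mpr hK.ne')
              (fun k => ‖c k‖)) ∧
    (∀ ε > (0 : ℝ), ∃ N : ℕ, 0 < N ∧ ∀ g : ℝ → EuclideanSpace ℝ (Fin n),
      (∀ i < N, ∀ k < K,
        ∀ t ∈ Ico (a + i * ((b - a) / N) + ((b - a) / N) * ∑ j ∈ Finset.range k, α j)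
          (a + i * ((b - a) / N) + ((b - a) / N) * ∑ j ∈ Finset.range (k + 1), α j),
          g t = c k) →
      ∀ t ∈ Icc a b,
        ‖∫ τ in a..t, (g τ - ∑ k ∈ Finset.range K, α k • c k)‖ < ε) := by
  set M := (Finset.range K).sup' (Finset.nonempty_range_iff.mpr hK.ne') fun k => ‖c k‖
  have hc (k : ℕ) (hk : k < K) : ‖c k‖ ≤ M :=
    Finset.le_sup' (fun k => ‖c k‖) (Finset.mem_range.2 hk)
  have hbound : ∀ N : ℕ, 0 < N → ∀ g : ℝ → EuclideanSpace ℝ (Fin n),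
      (∀ i < N, IsChatteringOn K α c g (a + i * ((b - a) / N)) ((b - a) / N)) →
      ∀ t ∈ Icc a b, ‖∫ τ in a..t, (g τ - ∑ k ∈ Finset.range K, α k • c k)‖ ≤
        2 * ((b - a) / N) * M :=
    fun N hN g hg t ht => norm_integral_sub_le_of_isChatteringOn hα0 hα1 hc hN hg ht
  refine ⟨hbound, fun ε hε => ?_⟩
  have hlim : Tendsto (fun N : ℕ => 2 * ((b - a) / N) * M) atTop (𝓝 0) := by
    simpa using ((tendsto_const_div_atTop_nhds_zero_nat (b - a)).const_mul 2).mul_const M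
  obtain ⟨N, hNε, hN⟩ := ((hlim.eventually (gt_mem_nhds hε)).and (eventually_gt_atTop 0)).exists
  exact ⟨N, hN, fun g hg t ht => (hbound N hN g hg t ht).trans_lt hNε⟩

/-- Quantitative Chattering Lemma for constant levels: partition `[a,b]` into
`N` subintervals of length `Δ = (b-a)/N` and apply, on each, the explicit
chattering construction with constant levels `c 0, …, c (K-1)` and chattering
measure `α` (value `c k` on the piece `[aᵢ + Δ·σ k, aᵢ + Δ·σ (k+1))`, where
`aᵢ = a + i·Δ` and `σ k` is the `k`-th partial sum of `α`).  Then the running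
integral of `g_N − ∑ k, α k • c k` is bounded in norm by
`2 · ((b-a)/N) · max_k ‖c k‖`; in particular, for every `ε > 0` there is an
`N` for which `g_N` witnesses the Chattering Lemma bound with that `ε`. -/
theorem chattering_quantitative
    (n K : ℕ) (hK : 0 < K) (a b : ℝ) (hab : a < b)
    (c : ℕ → EuclideanSpace ℝ (Fin n))
    (α : ℕ → ℝ) (hα0 : ∀ k < K, 0 ≤ α k)
    (hα1 : ∑ k ∈ Finset.range K, α k = 1) :
    (∀ N : ℕ, 0 < N → ∀ g : ℝ → EuclideanSpace ℝ (Fin n),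
      (∀ i < N, ∀ k < K,
        ∀ t ∈ Ico (a + i * ((b - a) / N) + ((b - a) / N) * ∑ j ∈ Finset.range k, α j)
          (a + i * ((b - a) / N) + ((b - a) / N) * ∑ j ∈ Finset.range (k + 1), α j),
          g t = c k) →
      ∀ t ∈ Icc a b,
        ‖∫ τ in a..t, (g τ - ∑ k ∈ Finset.range K, α k • c k)‖ ≤
          2 * ((b - a) / N) *
            (Finset.range K).sup' (Finset.nonempty_range_iff.mpr hK.ne')
              (fun k => ‖c k‖)) ∧
    (∀ ε > (0 : ℝ), ∃ N : ℕ, 0 < N ∧ ∀ g : ℝ → EuclideanSpace ℝ (Fin n),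
      (∀ i < N, ∀ k < K,
        ∀ t ∈ Ico (a + i * ((b - a) / N) + ((b - a) / N) * ∑ j ∈ Finset.range k, α j)
          (a + i * ((b - a) / N) + ((b - a) / N) * ∑ j ∈ Finset.range (k + 1), α j),
          g t = c k) →
      ∀ t ∈ Icc a b,
        ‖∫ τ in a..t, (g τ - ∑ k ∈ Finset.range K, α k • c k)‖ < ε) :=
  chattering_quantitative_general n K hK a b c α hα0 hα1
end

section
/- Let T > 0, let f : ℝ × ℝ^n × ℝ^m → ℝ^n be continuous, and let c_1, …, c_K ∈ ℝ^m be fixed vectors. Let x : [0,T] → ℝ^n be continuous and suppose there is a measurable control u : [0,T] → ℝ^m such that x(t) = x(a) + ∫_a^t f(s, x(s), u(s)) ds for all a ≤ t in [0,T]. Then for every ε > 0 there exists δ > 0 such that for every a ∈ [0,T], every Δ ∈ (0, δ] with a + Δ ≤ T, and every chattering measure α such that u restricted to [a, a+Δ] takes the value c_k on a measurable set A_k with μ(A_k) = α_k Δ, where A_1, …, A_K partition [a, a+Δ], one has ‖x(a+Δ) − x(a) − Δ · Σ_{k=1}^K α_k f(a, x(a), c_k)‖ ≤ ε Δ. -/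
open MeasureTheory Set Function

/-! On `[a, a + Δ]` the control is `c k` on `A k`, so `x (a + Δ) - x a` splits as
`∑ k, ∫ t in A k, f (t, x t, c k)`, while the Euler term is `∑ k, ∫ t in A k, f (a, x a, c k)`.
Since `(t, c) ↦ f (t, x t, c)` is uniformly continuous on the compact set `[0, T] × {c k}`,
the two integrands differ by at most `ε` once `Δ` is small, and the pieces add up to `ε Δ`. -/

theorem IsCompact.exists_pos_forall_dist_lt_of_continuousOn_prod
    {α β γ : Type*} [PseudoMetricSpace α] [PseudoMetricSpace β] [PseudoMetricSpace γ]
    {S : Set α} {C : Set β} (hS : IsCompact S) (hC : IsCompact C)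
    {g : α × β → γ} (hg : ContinuousOn g (S ×ˢ C)) {ε : ℝ} (hε : 0 < ε) :
    ∃ δ > 0, ∀ s ∈ S, ∀ t ∈ S, dist s t < δ →
      ∀ c ∈ C, dist (g (s, c)) (g (t, c)) < ε := by
  obtain ⟨δ, hδ, hg_unif⟩ :=
    Metric.uniformContinuousOn_iff.mp ((hS.prod hC).uniformContinuousOn_of_continuous hg) ε hε
  refine ⟨δ, hδ, fun s hs t ht hst c hc => hg_unif _ ⟨hs, hc⟩ _ ⟨ht, hc⟩ ?_⟩
  simpa [Prod.dist_eq] using hst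

theorem norm_setIntegral_iUnion_sub_sum_le
    {α E ι : Type*} [MeasurableSpace α] [NormedAddCommGroup E] [NormedSpace ℝ E]
    [CompleteSpace E] [Fintype ι] {μ : Measure α} {A : ι → Set α} (hA : ∀ k, MeasurableSet (A k))
    (hdisj : Pairwise (Disjoint on A)) (hA_fin : ∀ k, μ (A k) < ⊤)
    {F : α → E} (hF : ∀ k, IntegrableOn F (A k) μ) {v : ι → E} {ε : ℝ}
    (hFv : ∀ k, ∀ t ∈ A k, ‖F t - v k‖ ≤ ε) :
    ‖∫ t in ⋃ k, A k, F t ∂μ - ∑ k, μ.real (A k) • v k‖ ≤ ε * ∑ k, μ.real (A k) := by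
  have hpiece : ∀ k,
      ∫ t in A k, F t ∂μ - μ.real (A k) • v k = ∫ t in A k, (F t - v k) ∂μ := fun k => by
    rw [integral_sub (hF k) (integrableOn_const (hA_fin k).ne), setIntegral_const]
  rw [integral_iUnion_fintype hA hdisj hF, ← Finset.sum_sub_distrib, Finset.mul_sum]
  refine norm_sum_le_of_le _ fun k _ => ?_
  rw [hpiece]
  exact norm_setIntegral_le_of_norm_le_const (hA_fin k) (hFv k)

theorem norm_setIntegral_iUnion_sub_smul_sum_le
    {α E ι : Type*} [MeasurableSpace α] [NormedAddCommGroup E] [NormedSpace ℝ E]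
    [CompleteSpace E] [Fintype ι] {μ : Measure α} {A : ι → Set α} (hA : ∀ k, MeasurableSet (A k))
    (hdisj : Pairwise (Disjoint on A)) {w : ι → ℝ} (hw : ∀ k, 0 ≤ w k) (hw_sum : ∑ k, w k = 1)
    {Δ : ℝ} (hΔ : 0 ≤ Δ) (hvol : ∀ k, μ (A k) = ENNReal.ofReal (w k * Δ))
    {F : α → E} (hF : ∀ k, IntegrableOn F (A k) μ) {v : ι → E} {ε : ℝ}
    (hFv : ∀ k, ∀ t ∈ A k, ‖F t - v k‖ ≤ ε) :
    ‖∫ t in ⋃ k, A k, F t ∂μ - Δ • ∑ k, w k • v k‖ ≤ ε * Δ := by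
  have hreal : ∀ k, μ.real (A k) = w k * Δ := fun k => by
    rw [measureReal_def, hvol k, ENNReal.toReal_ofReal (mul_nonneg (hw k) hΔ)]
  have hbound :=
    norm_setIntegral_iUnion_sub_sum_le hA hdisj (fun k => by simp [hvol k]) hF hFv
  simp only [hreal, ← Finset.sum_mul, hw_sum, one_mul] at hbound
  simpa only [Finset.smul_sum, smul_smul, mul_comm Δ] using hbound

theorem chattering_euler_propagation_general
    (n m K : ℕ) (T : ℝ)
    (f : ℝ × EuclideanSpace ℝ (Fin n) × EuclideanSpace ℝ (Fin m) →
          EuclideanSpace ℝ (Fin n))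
    (hf : Continuous f)
    (c : Fin K → EuclideanSpace ℝ (Fin m))
    (x : ℝ → EuclideanSpace ℝ (Fin n)) (hx : ContinuousOn x (Icc 0 T))
    (u : ℝ → EuclideanSpace ℝ (Fin m))
    (hxeq : ∀ a ∈ Icc (0 : ℝ) T, ∀ t ∈ Icc (0 : ℝ) T, a ≤ t →
      x t = x a + ∫ s in a..t, f (s, x s, u s)) :
    ∀ ε > (0 : ℝ), ∃ δ > (0 : ℝ),
      ∀ a ∈ Icc (0 : ℝ) T, ∀ Δ : ℝ, 0 < Δ → Δ ≤ δ → a + Δ ≤ T →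
      ∀ α : Fin K → ℝ, (∀ k, 0 ≤ α k) → (∑ k, α k = 1) →
      ∀ A : Fin K → Set ℝ,
        (∀ k, MeasurableSet (A k)) →
        (∀ i j, i ≠ j → Disjoint (A i) (A j)) →
        (∀ k, A k ⊆ Icc a (a + Δ)) →
        (Icc a (a + Δ) ⊆ ⋃ k, A k) →
        (∀ k, volume (A k) = ENNReal.ofReal (α k * Δ)) →
        (∀ k, ∀ t ∈ A k, u t = c k) →
        ‖x (a + Δ) - x a - Δ • ∑ k, α k • f (a, x a, c k)‖ ≤ ε * Δ := by
  intro ε hε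
  have hφ : ContinuousOn (fun p : ℝ × _ => f (p.1, x p.1, p.2)) (Icc 0 T ×ˢ range c) :=
    hf.comp_continuousOn (continuousOn_fst.prodMk
      ((hx.comp continuousOn_fst fun _ hp => hp.1).prodMk continuousOn_snd))
  obtain ⟨δ, hδ, hφδ⟩ := isCompact_Icc.exists_pos_forall_dist_lt_of_continuousOn_prod
    (finite_range c).isCompact hφ hε
  refine ⟨δ / 2, by positivity, ?_⟩
  intro a ha Δ hΔ hΔδ haΔ α hα hα_sum A hA hdisj hAsub hcover hvol huc
  have hsub : Icc a (a + Δ) ⊆ Icc 0 T := Icc_subset_Icc ha.1 haΔ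
  have hunion : ⋃ k, A k = Icc a (a + Δ) := (iUnion_subset hAsub).antisymm hcover
  have hincr : x (a + Δ) - x a = ∫ t in ⋃ k, A k, f (t, x t, u t) := by
    rw [hxeq a ha (a + Δ) (hsub (right_mem_Icc.mpr (by linarith))) (by linarith),
      intervalIntegral.integral_of_le (by linarith), hunion, integral_Icc_eq_integral_Ioc]
    abel
  have hint : ∀ k, IntegrableOn (fun t => f (t, x t, u t)) (A k) := fun k =>
    ((hφ.comp (continuousOn_id.prodMk continuousOn_const) fun t ht => ⟨hsub ht, k, rfl⟩)
      |>.integrableOn_Icc.mono_set (hAsub k)).congr_fun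
      (fun t ht => by simp [huc k t ht]) (hA k)
  have hnear : ∀ k, ∀ t ∈ A k, ‖f (t, x t, u t) - f (a, x a, c k)‖ ≤ ε := by
    intro k t ht
    have hta : dist t a < δ :=
      (Real.dist_le_of_mem_Icc (hAsub k ht) (left_mem_Icc.2 (by linarith))).trans_lt (by linarith)
    rw [huc k t ht, ← dist_eq_norm]
    exact (hφδ t (hsub (hAsub k ht)) a ha hta (c k) ⟨k, rfl⟩).le
  rw [hincr]
  exact norm_setIntegral_iUnion_sub_smul_sum_le hA hdisj hα hα_sum hΔ.le hvol hint hnear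

/-- Chattering Euler propagation: if `x` solves the controlled integral
equation with dynamics `f` and a measurable control `u`, then for every
`ε > 0` there is `δ > 0` such that on every subinterval `[a, a+Δ] ⊆ [0,T]`
with `0 < Δ ≤ δ` on which `u` is a chattering control with levels `c k` and
measure `α`, one has
`‖x(a+Δ) − x(a) − Δ • ∑ k, α k • f(a, x(a), c k)‖ ≤ ε·Δ`. -/
theorem chattering_euler_propagation
    (n m K : ℕ) (T : ℝ) (hT : 0 < T)
    (f : ℝ × EuclideanSpace ℝ (Fin n) × EuclideanSpace ℝ (Fin m) →
          EuclideanSpace ℝ (Fin n))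
    (hf : Continuous f)
    (c : Fin K → EuclideanSpace ℝ (Fin m))
    (x : ℝ → EuclideanSpace ℝ (Fin n)) (hx : ContinuousOn x (Icc 0 T))
    (u : ℝ → EuclideanSpace ℝ (Fin m)) (hu : Measurable u)
    (hxeq : ∀ a ∈ Icc (0 : ℝ) T, ∀ t ∈ Icc (0 : ℝ) T, a ≤ t →
      x t = x a + ∫ s in a..t, f (s, x s, u s)) :
    ∀ ε > (0 : ℝ), ∃ δ > (0 : ℝ),
      ∀ a ∈ Icc (0 : ℝ) T, ∀ Δ : ℝ, 0 < Δ → Δ ≤ δ → a + Δ ≤ T →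
      ∀ α : Fin K → ℝ, (∀ k, 0 ≤ α k) → (∑ k, α k = 1) →
      ∀ A : Fin K → Set ℝ,
        (∀ k, MeasurableSet (A k)) →
        (∀ i j, i ≠ j → Disjoint (A i) (A j)) →
        (∀ k, A k ⊆ Icc a (a + Δ)) →
        (Icc a (a + Δ) ⊆ ⋃ k, A k) →
        (∀ k, volume (A k) = ENNReal.ofReal (α k * Δ)) →
        (∀ k, ∀ t ∈ A k, u t = c k) →
        ‖x (a + Δ) - x a - Δ • ∑ k, α k • f (a, x a, c k)‖ ≤ ε * Δ :=
  chattering_euler_propagation_general n m K T f hf c x hx u hxeq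
end
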